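/- Let s ∈ {1,2,3,4}, suppose the identity sequence id(k) = k belongs to D(A^s), and suppose (A^s id)(l) = β₀ + l for all l ∈ ℕ for some β₀ > 0 (i.e., the regression coefficient β₁ equals 1). Then p is the geometric distribution with parameter s/(s+β₀): p_k = (s/(s+β₀))·(β₀/(s+β₀))^k for all k ∈ ℕ. -/

import Mathlib

/-!
Let `g j = A^j id` and `w j = g (j+1) - g j`; these gaps are positive and sum to `β₀`. Splitting off
the first term of the tail sum gives `q l * A v l = p l * v l + q (l+1) * A v (l+1)`, so each gap
drives the next one through this recursion, and `A^s id = β₀ + id` closes the chain cyclically: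
`w 0` is driven by `w (s-1)`. The deviations `u j = w j - β₀/s` then obey a cyclic recursion whose
energy `q l ^ 2 * ∑ j, u j l ^ 2` is nondecreasing in `l`, because a zero-sum vector has
nonpositive cyclic autocorrelation when `s ≤ 4`. As `q l → 0` and the `u j` are bounded, the energy
vanishes, so `A id = id + β₀/s`, which forces `q (l+1) = β₀/(s+β₀) * q l`.
-/

open scoped BigOperators

noncomputable section

/-- Tail sum `q_l = Σ_{k ≥ l} p_k`. -/
def qtail (p : ℕ → ℝ) (l : ℕ) : ℝ := ∑' k, p (l + k)

/-- The operator `A` on real sequences: `(A v)(l) = (1/q_l) Σ_{k=l}^∞ p_k v(k)`. -/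
def opAR (p : ℕ → ℝ) (v : ℕ → ℝ) : ℕ → ℝ :=
  fun l => (1 / qtail p l) * ∑' k, p (l + k) * v (l + k)

/-- Membership in the domain `D(A) = {v : Σ_k p_k |v(k)| < ∞}` (real sequences). -/
def memDAR (p : ℕ → ℝ) (v : ℕ → ℝ) : Prop :=
  Summable fun k => p k * |v k|

/-- Membership in the domain `D(A^m) = {v : A^k v ∈ D(A) for k = 0,…,m-1}`. -/
def memDAiterR (p : ℕ → ℝ) (m : ℕ) (v : ℕ → ℝ) : Prop :=
  ∀ k < m, memDAR p ((opAR p)^[k] v)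

open Filter Topology Finset

section Shift

variable {G : Type*} [AddCommGroup G] [TopologicalSpace G] [IsTopologicalAddGroup G] {f : ℕ → G}

lemma Summable.nat_add_left (hf : Summable f) (l : ℕ) :
    Summable fun k => f (l + k) := by
  simpa only [add_comm] using (summable_nat_add_iff l).2 hf

lemma tsum_nat_add_left_eq_add [T2Space G] (hf : Summable f) (l : ℕ) :
    ∑' k, f (l + k) = f l + ∑' k, f (l + 1 + k) := by
  simpa only [add_zero, add_assoc, add_comm 1] using (hf.nat_add_left l).tsum_eq_zero_add

end Shift

section Tail

variable {p : ℕ → ℝ}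

lemma qtail_pos (hp : ∀ k, 0 < p k) (hsm : Summable p) (l : ℕ) : 0 < qtail p l :=
  (hsm.nat_add_left l).tsum_pos (fun _ => (hp _).le) 0 (hp _)

lemma qtail_eq_add_qtail_succ (hsm : Summable p) (l : ℕ) :
    qtail p l = p l + qtail p (l + 1) :=
  tsum_nat_add_left_eq_add hsm l

lemma qtail_zero (hsum : HasSum p 1) : qtail p 0 = 1 := by
  simp only [qtail, zero_add, hsum.tsum_eq]

lemma tendsto_qtail_atTop : Tendsto (qtail p) atTop (𝓝 0) := by
  show Tendsto (fun l => ∑' k, p (l + k)) atTop (𝓝 0)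
  simpa only [add_comm] using tendsto_sum_nat_add p

lemma summable_mul_of_memDAR (hp : ∀ k, 0 < p k) {v : ℕ → ℝ} (hv : memDAR p v) :
    Summable fun k => p k * v k :=
  .of_abs <| hv.congr fun k => by rw [abs_mul, abs_of_pos (hp k)]

lemma qtail_mul_opAR (hp : ∀ k, 0 < p k) (hsm : Summable p) (v : ℕ → ℝ) (l : ℕ) :
    qtail p l * opAR p v l = ∑' k, p (l + k) * v (l + k) := by
  rw [opAR, ← mul_assoc, mul_one_div_cancel (qtail_pos hp hsm l).ne', one_mul]

lemma opAR_sub {u v : ℕ → ℝ} (hu : Summable fun k => p k * u k)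
    (hv : Summable fun k => p k * v k) : opAR p (u - v) = opAR p u - opAR p v := by
  ext l
  simp only [opAR, Pi.sub_apply, mul_sub]
  rw [(hu.nat_add_left l).tsum_sub (hv.nat_add_left l), mul_sub]

lemma lt_opAR (hp : ∀ k, 0 < p k) (hsm : Summable p) {v : ℕ → ℝ}
    (hv : Summable fun k => p k * v k) {c : ℝ} {l k₀ : ℕ} (hle : ∀ k, c ≤ v (l + k))
    (hlt : c < v (l + k₀)) : c < opAR p v l := by
  have hq := qtail_pos hp hsm l
  have hsum_lt : c * qtail p l < ∑' k, p (l + k) * v (l + k) := by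
    rw [qtail, ← tsum_mul_left]
    refine Summable.tsum_lt_tsum (i := k₀) (fun k => ?_) ?_ ((hsm.nat_add_left l).mul_left c)
      (hv.nat_add_left l)
    · rw [mul_comm]; exact mul_le_mul_of_nonneg_left (hle k) (hp _).le
    · rw [mul_comm]; exact mul_lt_mul_of_pos_left hlt (hp _)
  rw [← qtail_mul_opAR hp hsm, mul_comm] at hsum_lt
  exact lt_of_mul_lt_mul_left hsum_lt hq.le

end Tail

def TailRecursion (p v w : ℕ → ℝ) : Prop :=
  ∀ l, qtail p l * w l = p l * v l + qtail p (l + 1) * w (l + 1)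

section Recursion

variable {p : ℕ → ℝ}

lemma tailRecursion_opAR (hp : ∀ k, 0 < p k) (hsm : Summable p) {v : ℕ → ℝ}
    (hv : Summable fun k => p k * v k) : TailRecursion p v (opAR p v) := by
  intro l
  rw [qtail_mul_opAR hp hsm, qtail_mul_opAR hp hsm,
    tsum_nat_add_left_eq_add (f := fun k => p k * v k) hv l]

lemma TailRecursion.sub_const {v w : ℕ → ℝ} (h : TailRecursion p v w) (hsm : Summable p)
    (c : ℝ) : TailRecursion p (v - fun _ => c) (w - fun _ => c) := by
  intro l
  simp only [Pi.sub_apply]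
  linear_combination h l - c * qtail_eq_add_qtail_succ hsm l

lemma sum_sq_le_of_perm_step {ι : Type*} [Fintype ι] (σ : Equiv.Perm ι) {a b c : ℝ}
    (hab : 0 ≤ a * b) {x y : ι → ℝ} (hxy : ∀ i, c * y (σ i) = a * x (σ i) - b * x i)
    (hcorr : ∑ i, x i * x (σ i) ≤ 0) :
    a ^ 2 * ∑ i, x i ^ 2 ≤ c ^ 2 * ∑ i, y i ^ 2 := by
  have expand : c ^ 2 * ∑ i, y i ^ 2 =
      a ^ 2 * ∑ i, x (σ i) ^ 2 - 2 * (a * b) * ∑ i, x i * x (σ i) + b ^ 2 * ∑ i, x i ^ 2 := by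
    rw [← Equiv.sum_comp σ (fun i => y i ^ 2)]
    simp only [mul_sum, ← sum_sub_distrib, ← sum_add_distrib]
    refine sum_congr rfl fun i _ => ?_
    linear_combination (c * y (σ i) + a * x (σ i) - b * x i) * hxy i
  rw [expand, Equiv.sum_comp σ (fun i => x i ^ 2)]
  nlinarith [mul_nonneg hab (neg_nonneg.2 hcorr),
    sum_nonneg fun i (_ : i ∈ univ) => sq_nonneg (x i), sq_nonneg b]

lemma TailRecursion.eq_zero_of_perm (hp : ∀ k, 0 < p k) (hsm : Summable p) {ι : Type*} [Fintype ι]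
    (σ : Equiv.Perm ι) {u : ι → ℕ → ℝ} (hrec : ∀ i, TailRecursion p (u i) (u (σ i)))
    (hcorr : ∀ l, ∑ i, u i l * u (σ i) l ≤ 0) {B : ℝ} (hB : ∀ i l, |u i l| ≤ B) (i : ι) (l : ℕ) :
    u i l = 0 := by
  set E : ℕ → ℝ := fun l => qtail p l ^ 2 * ∑ i, u i l ^ 2
  have hE_mono : Monotone E := by
    refine monotone_nat_of_le_succ fun l => sum_sq_le_of_perm_step σ
      (mul_nonneg (qtail_pos hp hsm l).le (hp l).le) (fun i => ?_) (hcorr l)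
    linear_combination -hrec i l
  have hE_nonneg : ∀ l, 0 ≤ E l := fun l => by positivity
  have hE_tendsto : Tendsto E atTop (𝓝 0) := by
    have hlim : Tendsto (fun l => qtail p l ^ 2 * ∑ _i : ι, B ^ 2) atTop (𝓝 0) := by
      convert ((tendsto_qtail_atTop (p := p)).pow 2).mul_const (∑ _i : ι, B ^ 2) using 2
      ring
    refine squeeze_zero hE_nonneg (fun l => ?_) hlim
    refine mul_le_mul_of_nonneg_left (sum_le_sum fun j _ => ?_) (sq_nonneg _)
    exact sq_le_sq' (abs_le.1 (hB j l)).1 (abs_le.1 (hB j l)).2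
  have hE_zero : E l ≤ 0 := hE_mono.ge_of_tendsto hE_tendsto l
  have hsq : u i l ^ 2 ≤ ∑ j, u j l ^ 2 :=
    single_le_sum (fun j _ => sq_nonneg (u j l)) (mem_univ i)
  have hS : ∑ j, u j l ^ 2 ≤ 0 :=
    le_of_mul_le_mul_left (by simpa [E] using hE_zero) (pow_pos (qtail_pos hp hsm l) 2)
  exact pow_eq_zero_iff two_ne_zero |>.1 (le_antisymm (hsq.trans hS) (sq_nonneg _))

end Recursion

/- For `∑ x = 0`, the sum is `s⁻¹ ∑_{0<m<s} cos (2πm/s) |x̂ m|²` in terms of the discrete Fourier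
transform, and `cos (2πm/s) ≤ 0` for all `0 < m < s` exactly when `s ≤ 4`. -/
lemma sum_mul_finRotate_nonpos {s : ℕ} (hs : s ≤ 4) {x : Fin s → ℝ} (hx : ∑ i, x i = 0) :
    ∑ i, x i * x (finRotate s i) ≤ 0 := by
  interval_cases s
  · simp
  · simp_all
  · simp_all [Fin.sum_univ_two]
    nlinarith [sq_nonneg (x 0), sq_nonneg (x 1), mul_self_eq_zero.2 hx]
  · simp_all [Fin.sum_univ_three]
    nlinarith [sq_nonneg (x 0), sq_nonneg (x 1), sq_nonneg (x 2), mul_self_eq_zero.2 hx]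
  · simp_all [Fin.sum_univ_four]
    nlinarith [sq_nonneg (x 0 + x 2), mul_eq_zero_of_left hx (x 0 + x 2)]

section Geometric

variable {p : ℕ → ℝ}

lemma qtail_eq_pow_of_opAR_id (hp : ∀ k, 0 < p k) (hsum : HasSum p 1)
    (hid : Summable fun k => p k * k) {c : ℝ} (h : ∀ l, opAR p (fun k => (k : ℝ)) l = l + c)
    (l : ℕ) : qtail p l = (c / (1 + c)) ^ l := by
  have hsm := hsum.summable
  have step : ∀ l, (1 + c) * qtail p (l + 1) = c * qtail p l := fun l => by
    have e := tailRecursion_opAR hp hsm hid l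
    rw [h, h] at e
    push_cast at e
    linear_combination -e + l * qtail_eq_add_qtail_succ hsm l
  have hc : 1 + c ≠ 0 := fun hc => by
    have := step 0
    rw [hc, qtail_zero hsum] at this
    linarith
  induction l with
  | zero => simpa using qtail_zero hsum
  | succ l ih =>
    rw [pow_succ, ← ih, mul_div_assoc', eq_div_iff hc]
    linear_combination step l

lemma eq_geometric_of_opAR_id (hp : ∀ k, 0 < p k) (hsum : HasSum p 1)
    (hid : Summable fun k => p k * k) {c : ℝ} (h : ∀ l, opAR p (fun k => (k : ℝ)) l = l + c)
    (k : ℕ) : p k = 1 / (1 + c) * (c / (1 + c)) ^ k := by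
  have hq := qtail_eq_pow_of_opAR_id hp hsum hid h
  have hc : 1 + c ≠ 0 := fun hc => by
    simpa [hq, hc] using qtail_pos hp hsum.summable 1
  have hrec := qtail_eq_add_qtail_succ hsum.summable k
  rw [hq, hq] at hrec
  have hpk : p k = (c / (1 + c)) ^ k * (1 - c / (1 + c)) := by linear_combination -hrec
  rw [hpk, one_sub_div hc, add_sub_cancel_right]
  ring

end Geometric

lemma memDAiterR.mono {p v : ℕ → ℝ} {m n : ℕ} (h : memDAiterR p m v) (hnm : n ≤ m) :
    memDAiterR p n v :=
  fun k hk => h k (hk.trans_le hnm)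

def recordGap (p : ℕ → ℝ) (j : ℕ) : ℕ → ℝ :=
  (opAR p)^[j + 1] (fun k => (k : ℝ)) - (opAR p)^[j] (fun k => (k : ℝ))

section RecordGap

variable {p : ℕ → ℝ}

lemma summable_mul_recordGap (hp : ∀ k, 0 < p k) {j : ℕ}
    (hid : memDAiterR p (j + 2) (fun k => (k : ℝ))) :
    Summable fun k => p k * recordGap p j k :=
  ((summable_mul_of_memDAR hp (hid (j + 1) (by omega))).sub
    (summable_mul_of_memDAR hp (hid j (by omega)))).congr fun k => by
      simp only [recordGap, Pi.sub_apply, mul_sub]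

lemma recordGap_succ (hp : ∀ k, 0 < p k) {j : ℕ} (hid : memDAiterR p (j + 2) (fun k => (k : ℝ))) :
    recordGap p (j + 1) = opAR p (recordGap p j) := by
  rw [recordGap, recordGap, opAR_sub (summable_mul_of_memDAR hp (hid (j + 1) (by omega)))
    (summable_mul_of_memDAR hp (hid j (by omega))), Function.iterate_succ_apply',
    ← Function.iterate_succ_apply' (opAR p) j]

lemma recordGap_pos (hp : ∀ k, 0 < p k) (hsm : Summable p) {j : ℕ}
    (hid : memDAiterR p (j + 1) (fun k => (k : ℝ))) (l : ℕ) : 0 < recordGap p j l := by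
  induction j generalizing l with
  | zero =>
    refine sub_pos.2 (lt_opAR hp hsm (k₀ := 1) (summable_mul_of_memDAR hp (hid 0 one_pos))
      (fun k => ?_) ?_) <;> simp
  | succ j ih =>
    rw [recordGap_succ hp hid]
    exact lt_opAR hp hsm (k₀ := 0) (summable_mul_recordGap hp hid)
      (fun k => (ih (hid.mono (by omega)) (l + k)).le) (ih (hid.mono (by omega)) _)

lemma tailRecursion_recordGap (hp : ∀ k, 0 < p k) (hsm : Summable p) {j : ℕ}
    (hid : memDAiterR p (j + 2) (fun k => (k : ℝ))) :
    TailRecursion p (recordGap p j) (recordGap p (j + 1)) :=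
  recordGap_succ hp hid ▸ tailRecursion_opAR hp hsm (summable_mul_recordGap hp hid)

lemma tailRecursion_recordGap_last (hp : ∀ k, 0 < p k) (hsm : Summable p) {n : ℕ}
    (hid : memDAiterR p (n + 1) (fun k => (k : ℝ))) {β : ℝ}
    (hlin : ∀ l : ℕ, ((opAR p)^[n + 1] (fun k => (k : ℝ))) l = β + l) :
    TailRecursion p (recordGap p n) (recordGap p 0) := by
  intro l
  have e₀ := tailRecursion_opAR hp hsm (summable_mul_of_memDAR hp (hid 0 (by omega))) l
  have eₙ := tailRecursion_opAR hp hsm (summable_mul_of_memDAR hp (hid n (by omega))) l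
  rw [← Function.iterate_succ_apply' (opAR p), hlin, hlin] at eₙ
  simp only [Function.iterate_zero, id] at e₀
  simp only [recordGap, Pi.sub_apply, hlin, zero_add, Function.iterate_one, Function.iterate_zero,
    id]
  push_cast at eₙ ⊢
  linear_combination e₀ - eₙ + β * qtail_eq_add_qtail_succ hsm l

lemma sum_range_recordGap (s l : ℕ) :
    ∑ j ∈ range s, recordGap p j l = ((opAR p)^[s] (fun k => (k : ℝ))) l - l := by
  simpa [recordGap] using sum_range_sub (fun j => ((opAR p)^[j] (fun k => (k : ℝ))) l) s

lemma recordGap_le_iterate_sub (hp : ∀ k, 0 < p k) (hsm : Summable p) {s j : ℕ}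
    (hid : memDAiterR p s (fun k => (k : ℝ))) (hj : j < s) (l : ℕ) :
    recordGap p j l ≤ ((opAR p)^[s] (fun k => (k : ℝ))) l - l :=
  sum_range_recordGap s l ▸ single_le_sum
    (fun _ hi => (recordGap_pos hp hsm (hid.mono (mem_range.1 hi)) l).le)
    (mem_range.2 hj)

lemma opAR_id_eq_add_of_iterate_eq_add (hp : ∀ k, 0 < p k) (hsm : Summable p) {n : ℕ}
    (hn : n + 1 ≤ 4) (hid : memDAiterR p (n + 1) (fun k => (k : ℝ))) {β : ℝ}
    (hlin : ∀ l : ℕ, ((opAR p)^[n + 1] (fun k => (k : ℝ))) l = β + l) (l : ℕ) :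
    opAR p (fun k => (k : ℝ)) l = l + β / (n + 1) := by
  set u : Fin (n + 1) → ℕ → ℝ := fun i => recordGap p i - fun _ => β / (n + 1) with hu
  have hrec : ∀ i, TailRecursion p (u i) (u (finRotate _ i)) := by
    intro i
    refine TailRecursion.sub_const ?_ hsm _
    by_cases hi : i = Fin.last n
    · rw [hi, finRotate_last]
      exact tailRecursion_recordGap_last hp hsm hid hlin
    · rw [coe_finRotate_of_ne_last hi]
      have := Fin.val_lt_last hi
      exact tailRecursion_recordGap hp hsm (hid.mono (by omega))
  have hu_sum : ∀ l, ∑ i, u i l = 0 := by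
    intro l
    simp only [hu, Pi.sub_apply]
    rw [Fin.sum_univ_eq_sum_range (fun j => recordGap p j l - β / (n + 1)), sum_sub_distrib,
      sum_range_recordGap, hlin, sum_const, card_range, nsmul_eq_mul]
    field_simp
    push_cast
    ring
  have hgap_pos : ∀ (i : Fin (n + 1)) l, 0 < recordGap p i l := fun i =>
    recordGap_pos hp hsm (hid.mono i.2)
  have hgap_le : ∀ (i : Fin (n + 1)) l, recordGap p i l ≤ β := fun i l => by
    simpa [hlin] using recordGap_le_iterate_sub hp hsm hid i.2 l
  have hβ : 0 < β := (hgap_pos 0 0).trans_le (hgap_le 0 0)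
  have hmean : 0 < β / (n + 1) ∧ β / (n + 1) ≤ β :=
    ⟨by positivity, div_le_self hβ.le (by simp)⟩
  have hbound : ∀ i l, |u i l| ≤ β := fun i l =>
    show |recordGap p i l - β / (n + 1)| ≤ β from
      abs_le.2 ⟨by linarith [hgap_pos i l, hmean.2], by linarith [hgap_le i l, hmean.1]⟩
  have := TailRecursion.eq_zero_of_perm hp hsm (finRotate _) hrec
    (fun l => sum_mul_finRotate_nonpos hn (hu_sum l)) hbound 0 l
  simp only [hu, recordGap, Pi.sub_apply, Fin.val_zero, zero_add, Function.iterate_one,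
    Function.iterate_zero_apply] at this
  linarith

end RecordGap

theorem geometric_characterization_slope_one_general
    (p : ℕ → ℝ) (hp : ∀ k, 0 < p k) (hsum : HasSum p 1)
    (s : ℕ) (hs : s = 1 ∨ s = 2 ∨ s = 3 ∨ s = 4) (β₀ : ℝ)
    (hid : memDAiterR p s (fun k => (k : ℝ)))
    (hlin : ∀ l : ℕ, ((opAR p)^[s] (fun k => (k : ℝ))) l = β₀ + l) :
    ∀ k : ℕ, p k = (s / (s + β₀)) * (β₀ / (s + β₀)) ^ k := by
  obtain ⟨n, rfl⟩ : ∃ n, s = n + 1 := ⟨s - 1, by omega⟩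
  have hA := opAR_id_eq_add_of_iterate_eq_add hp hsum.summable (by omega) hid hlin
  intro k
  rw [eq_geometric_of_opAR_id hp hsum (summable_mul_of_memDAR hp (hid 0 (by omega))) hA k]
  push_cast
  field_simp

/-- For `s ∈ {1,2,3,4}`, if `(A^s id)(l) = β₀ + l` with `β₀ > 0` (regression slope
`β₁ = 1`), then `p` is geometric with parameter `s/(s+β₀)`. -/
theorem geometric_characterization_slope_one
    (p : ℕ → ℝ) (hp : ∀ k, 0 < p k) (hsum : HasSum p 1)
    (s : ℕ) (hs : s = 1 ∨ s = 2 ∨ s = 3 ∨ s = 4) (β₀ : ℝ) (hβ₀ : 0 < β₀)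
    (hid : memDAiterR p s (fun k => (k : ℝ)))
    (hlin : ∀ l : ℕ, ((opAR p)^[s] (fun k => (k : ℝ))) l = β₀ + l) :
    ∀ k : ℕ, p k = (s / (s + β₀)) * (β₀ / (s + β₀)) ^ k :=
  geometric_characterization_slope_one_general p hp hsum s hs β₀ hid hlin
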